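/- Let Φ be a completely positive linear map between matrix algebras and G the matrix geometric mean. Then Φ(G(A,B)) ≤ G(Φ(A), Φ(B)) for positive definite A, B such that Φ(A), Φ(B) are positive definite. -/

import Mathlib

open Matrix
open scoped ComplexOrder Classical

/-- Square root of a positive semidefinite matrix, extended by `0`. -/
noncomputable def msqrt {n : Type*} [Fintype n] [DecidableEq n] (A : Matrix n n ℂ) :
    Matrix n n ℂ :=
  if h : A.PosSemidef then
    (h.1.eigenvectorUnitary : Matrix n n ℂ) * diagonal ((↑) ∘ Real.sqrt ∘ h.1.eigenvalues) *
      (star h.1.eigenvectorUnitary : Matrix n n ℂ) else 0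

/-- Real power of a Hermitian matrix via the functional calculus, extended by `0`. -/
noncomputable def mrpow {n : Type*} [Fintype n] [DecidableEq n] (A : Matrix n n ℂ) (α : ℝ) :
    Matrix n n ℂ :=
  if h : A.IsHermitian then h.cfc (fun t => t ^ α) else 0

/-- A completely positive linear map between matrix algebras (Choi–Kraus form). -/
def IsCPMap {n m : Type*} [Fintype n] [Fintype m] (Φ : Matrix n n ℂ → Matrix m m ℂ) : Prop :=
  ∃ (r : ℕ) (C : Fin r → Matrix n m ℂ), ∀ X, Φ X = ∑ i, (C i)ᴴ * X * C i

/-- The matrix geometric mean `A^{1/2} (A^{-1/2} B A^{-1/2})^{1/2} A^{1/2}`. -/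
noncomputable def geomMean {n : Type*} [Fintype n] [DecidableEq n] (A B : Matrix n n ℂ) :
    Matrix n n ℂ :=
  msqrt A * msqrt ((msqrt A)⁻¹ * B * (msqrt A)⁻¹) * msqrt A

/-- The weighted geometric mean `B^{1/2} (B^{-1/2} A B^{-1/2})^α B^{1/2}`. -/
noncomputable def wgeomMean {n : Type*} [Fintype n] [DecidableEq n] (α : ℝ)
    (A B : Matrix n n ℂ) : Matrix n n ℂ :=
  msqrt B * mrpow ((msqrt B)⁻¹ * A * (msqrt B)⁻¹) α * msqrt B

/-- The harmonic mean `2 (A⁻¹ + B⁻¹)⁻¹`. -/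
noncomputable def harmMean {n : Type*} [Fintype n] [DecidableEq n] (A B : Matrix n n ℂ) :
    Matrix n n ℂ :=
  (2 : ℂ) • (A⁻¹ + B⁻¹)⁻¹


/-!
Ando's inequality via the extremal characterization of the geometric mean: `G(A, B)` is the
largest Hermitian `X` with `[[A, X], [X, B]] ≥ 0`. A completely positive map sends such a block
matrix to `[[Φ A, Φ X], [Φ X, Φ B]] ≥ 0`, since on blocks it acts by conjugation with the
block-diagonal Kraus operators; so `Φ (G(A, B))` is admissible for the pair `(Φ A, Φ B)`.
For maximality, the Schur complement gives `X A⁻¹ X ≤ B`, i.e. `T * T ≤ A^{-1/2} B A^{-1/2}` for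
`T = A^{-1/2} X A^{-1/2}`, and then `T ≤ |T| = √(T * T) ≤ √(A^{-1/2} B A^{-1/2})` by operator
monotonicity of the square root.
-/

-- The L2 operator norm makes `Matrix n n ℂ` a C⋆-algebra, where `CFC.sqrt` is operator monotone.
open scoped MatrixOrder Matrix.Norms.L2Operator

theorem IsSelfAdjoint.le_sqrt_of_mul_self_le {R : Type*} [NonUnitalCStarAlgebra R]
    [PartialOrder R] [StarOrderedRing R] {a b : R} (ha : IsSelfAdjoint a) (h : a * a ≤ b) :
    a ≤ CFC.sqrt b :=
  calc a ≤ CFC.abs a := by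
        rw [← sub_nonneg, CFC.abs_sub_self a]
        exact nsmul_nonneg (CFC.negPart_nonneg a) 2
    _ = CFC.sqrt (a * a) := by rw [CFC.abs, ha.star_eq]
    _ ≤ CFC.sqrt b := CFC.sqrt_le_sqrt _ _ h

namespace Matrix

theorem fromBlocks_sum {ι l m n o α : Type*} [AddCommMonoid α] (s : Finset ι)
    (A : ι → Matrix n l α) (B : ι → Matrix n m α) (C : ι → Matrix o l α)
    (D : ι → Matrix o m α) :
    fromBlocks (∑ i ∈ s, A i) (∑ i ∈ s, B i) (∑ i ∈ s, C i) (∑ i ∈ s, D i) =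
      ∑ i ∈ s, fromBlocks (A i) (B i) (C i) (D i) := by
  ext (_ | _) (_ | _) <;> simp [sum_apply]

variable {𝕜 n : Type*} [RCLike 𝕜] [Fintype n] [DecidableEq n]

theorem PosDef.isUnit_det_sqrt {A : Matrix n n 𝕜} (hA : A.PosDef) : IsUnit (CFC.sqrt A).det :=
  (isUnit_iff_isUnit_det _).mp ((CFC.isUnit_sqrt_iff A hA.posSemidef.nonneg).mpr hA.isUnit)

theorem inv_eq_inv_sqrt_mul_inv_sqrt {A : Matrix n n 𝕜} (hA : 0 ≤ A) :
    A⁻¹ = (CFC.sqrt A)⁻¹ * (CFC.sqrt A)⁻¹ := by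
  conv_lhs => rw [← CFC.sqrt_mul_sqrt_self A hA]
  exact mul_inv_rev _ _

theorem isSelfAdjoint_inv_sqrt (A : Matrix n n 𝕜) : IsSelfAdjoint (CFC.sqrt A)⁻¹ :=
  (CFC.sqrt_nonneg A).posSemidef.isHermitian.inv

end Matrix

theorem IsCPMap.posSemidef_fromBlocks {n m : Type*} [Fintype n] [Fintype m]
    {Φ : Matrix n n ℂ → Matrix m m ℂ} (hΦ : IsCPMap Φ) {A X Y B : Matrix n n ℂ}
    (h : (fromBlocks A X Y B).PosSemidef) :
    (fromBlocks (Φ A) (Φ X) (Φ Y) (Φ B)).PosSemidef := by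
  obtain ⟨r, C, hC⟩ := hΦ
  simp only [hC, fromBlocks_sum]
  refine posSemidef_sum _ fun i _ => ?_
  have hconj : fromBlocks ((C i)ᴴ * A * C i) ((C i)ᴴ * X * C i) ((C i)ᴴ * Y * C i)
      ((C i)ᴴ * B * C i) =
      (fromBlocks (C i) 0 0 (C i))ᴴ * fromBlocks A X Y B * fromBlocks (C i) 0 0 (C i) := by
    simp [fromBlocks_conjTranspose, fromBlocks_multiply]
  rw [hconj]
  exact h.conjTranspose_mul_mul_same _

section GeomMean

variable {n : Type*} [Fintype n] [DecidableEq n]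

theorem msqrt_eq_sqrt {A : Matrix n n ℂ} (hA : 0 ≤ A) : msqrt A = CFC.sqrt A := by
  rw [msqrt, dif_pos hA.posSemidef, CFC.sqrt_eq_cfc, cfc_nnreal_eq_real _ A,
    hA.posSemidef.1.cfc_eq]
  simp [IsHermitian.cfc, Unitary.conjStarAlgAut_apply, Function.comp_def,
    hA.posSemidef.eigenvalues_nonneg]

theorem geomMean_eq_sqrt {A B : Matrix n n ℂ} (hA : 0 ≤ A) (hB : 0 ≤ B) :
    geomMean A B =
      CFC.sqrt A * CFC.sqrt ((CFC.sqrt A)⁻¹ * B * (CFC.sqrt A)⁻¹) * CFC.sqrt A := by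
  rw [geomMean, msqrt_eq_sqrt hA,
    msqrt_eq_sqrt ((isSelfAdjoint_inv_sqrt A).conjugate_nonneg hB)]

theorem geomMean_nonneg {A B : Matrix n n ℂ} (hA : 0 ≤ A) (hB : 0 ≤ B) : 0 ≤ geomMean A B := by
  rw [geomMean_eq_sqrt hA hB]
  exact (IsSelfAdjoint.of_nonneg (CFC.sqrt_nonneg A)).conjugate_nonneg (CFC.sqrt_nonneg _)

theorem geomMean_mul_inv_mul_geomMean {A B : Matrix n n ℂ} (hA : A.PosDef) (hB : 0 ≤ B) :
    geomMean A B * A⁻¹ * geomMean A B = B := by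
  have hS := hA.isUnit_det_sqrt
  have hW := CFC.sqrt_mul_sqrt_self _ ((isSelfAdjoint_inv_sqrt A).conjugate_nonneg hB)
  rw [geomMean_eq_sqrt hA.posSemidef.nonneg hB,
    inv_eq_inv_sqrt_mul_inv_sqrt hA.posSemidef.nonneg]
  set S := CFC.sqrt A
  set W := CFC.sqrt (S⁻¹ * B * S⁻¹)
  calc S * W * S * (S⁻¹ * S⁻¹) * (S * W * S) = S * (W * W) * S := by
        simp only [Matrix.mul_assoc, nonsing_inv_mul_cancel_left _ _ hS,
          mul_nonsing_inv_cancel_left _ _ hS]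
    _ = B := by
        rw [hW]
        simp only [Matrix.mul_assoc, mul_nonsing_inv_cancel_left _ _ hS, nonsing_inv_mul _ hS,
          Matrix.mul_one]

theorem posSemidef_fromBlocks_geomMean {A B : Matrix n n ℂ} (hA : A.PosDef) (hB : 0 ≤ B) :
    (fromBlocks A (geomMean A B) (geomMean A B) B).PosSemidef := by
  have := hA.isUnit.invertible
  have hG : (geomMean A B)ᴴ = geomMean A B :=
    (geomMean_nonneg hA.posSemidef.nonneg hB).posSemidef.isHermitian.eq
  have := (PosDef.fromBlocks₁₁ (geomMean A B) B hA).mpr <| by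
    rw [hG, geomMean_mul_inv_mul_geomMean hA hB, sub_self]
    exact PosSemidef.zero
  rwa [hG] at this

theorem le_geomMean_of_posSemidef_fromBlocks {A B X : Matrix n n ℂ} (hA : A.PosDef)
    (h : (fromBlocks A X X B).PosSemidef) : X ≤ geomMean A B := by
  have hX : Xᴴ = X := by
    have := h.isHermitian.eq
    rw [fromBlocks_conjTranspose, fromBlocks_inj] at this
    exact this.2.1
  have := hA.isUnit.invertible
  have hSchur : X * A⁻¹ * X ≤ B := by
    have := (PosDef.fromBlocks₁₁ X B hA).mp (by rwa [hX])
    rwa [hX] at this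
  have hB : 0 ≤ B := by
    have := (hA.inv.posSemidef.conjTranspose_mul_mul_same X).nonneg
    rw [hX] at this
    exact this.trans hSchur
  have hS := hA.isUnit_det_sqrt
  set S := CFC.sqrt A with hSdef
  have hSi : IsSelfAdjoint S⁻¹ := isSelfAdjoint_inv_sqrt A
  set T := S⁻¹ * X * S⁻¹
  have hT : IsSelfAdjoint T := by
    simpa only [hSi.star_eq] using IsSelfAdjoint.conjugate (show IsSelfAdjoint X from hX) S⁻¹
  have hTT : T * T ≤ S⁻¹ * B * S⁻¹ :=
    calc T * T = S⁻¹ * (X * A⁻¹ * X) * S⁻¹ := by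
          rw [inv_eq_inv_sqrt_mul_inv_sqrt hA.posSemidef.nonneg, ← hSdef]
          simp only [T, Matrix.mul_assoc]
      _ ≤ S⁻¹ * B * S⁻¹ := hSi.conjugate_le_conjugate hSchur
  calc X = S * T * S := by
        simp only [T, Matrix.mul_assoc, mul_nonsing_inv_cancel_left _ _ hS, nonsing_inv_mul _ hS,
          Matrix.mul_one]
    _ ≤ S * CFC.sqrt (S⁻¹ * B * S⁻¹) * S :=
        (IsSelfAdjoint.of_nonneg (CFC.sqrt_nonneg A)).conjugate_le_conjugate
          (hT.le_sqrt_of_mul_self_le hTT)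
    _ = geomMean A B := (geomMean_eq_sqrt hA.posSemidef.nonneg hB).symm

end GeomMean

theorem cp_geomMean_general {n m : Type*} [Fintype n] [DecidableEq n] [Fintype m] [DecidableEq m]
    (Φ : Matrix n n ℂ → Matrix m m ℂ) (hΦ : IsCPMap Φ)
    (A B : Matrix n n ℂ) (hA : A.PosDef) (hB : B.PosDef)
    (hΦA : (Φ A).PosDef) :
    (geomMean (Φ A) (Φ B) - Φ (geomMean A B)).PosSemidef :=
  le_geomMean_of_posSemidef_fromBlocks hΦA
    (hΦ.posSemidef_fromBlocks (posSemidef_fromBlocks_geomMean hA hB.posSemidef.nonneg))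

/-- Ando's inequality: `Φ(G(A,B)) ≤ G(Φ(A), Φ(B))` for a completely positive map `Φ`. -/
theorem cp_geomMean {n m : Type*} [Fintype n] [DecidableEq n] [Fintype m] [DecidableEq m]
    (Φ : Matrix n n ℂ → Matrix m m ℂ) (hΦ : IsCPMap Φ)
    (A B : Matrix n n ℂ) (hA : A.PosDef) (hB : B.PosDef)
    (hΦA : (Φ A).PosDef) (hΦB : (Φ B).PosDef) :
    (geomMean (Φ A) (Φ B) - Φ (geomMean A B)).PosSemidef :=
  cp_geomMean_general Φ hΦ A B hA hB hΦA
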